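/- arXiv:2001.09525 — 2 statements merged into one kernel-verified Lean document; each statement's English description precedes it below -/
import Mathlib

section
/- For every triangle ABC with side lengths a < b < c: t(AB'C) > t(ABC') if and only if b² > ac, and t(AB'C) ≥ t(ABC') if and only if b² ≥ ac. -/
open EuclideanGeometry MeasureTheory Real
open scoped ENNReal Pointwise

noncomputable section

/-- The Euclidean plane. -/
abbrev Pt : Type := EuclideanSpace ℝ (Fin 2)

/-- The closed triangular region with vertices `A`, `B`, `C`
(the convex hull of the three vertices). -/
def tri (A B C : Pt) : Set Pt := convexHull ℝ {A, B, C}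

/-- The area of the triangle `A B C`:
the 2-dimensional Lebesgue measure of its convex hull. -/
def triArea (A B C : Pt) : ℝ := (volume (tri A B C)).toReal

/-- A triangle is isosceles if at least two of its side lengths coincide. -/
def IsIsosceles (A B C : Pt) : Prop :=
  dist B C = dist C A ∨ dist C A = dist A B ∨ dist A B = dist B C

/-- `S P R` is an isosceles container for the triangle `A B C`:
it is a genuine isosceles triangle whose convex hull contains that of `A B C`. -/
def IsIsoscelesContainer (A B C S P R : Pt) : Prop :=
  AffineIndependent ℝ ![S, P, R] ∧ IsIsosceles S P R ∧ tri A B C ⊆ tri S P R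

/-- `S P R` is a minimum area isosceles container for the triangle `A B C`. -/
def IsMinIsoscelesContainer (A B C S P R : Pt) : Prop :=
  IsIsoscelesContainer A B C S P R ∧
    ∀ S' P' R' : Pt, IsIsoscelesContainer A B C S' P' R' →
      triArea S P R ≤ triArea S' P' R'

/-- `Z` lies on the ray starting at `X` passing through `Y`. -/
def OnRay (X Y Z : Pt) : Prop := SameRay ℝ (Y - X) (Z - X)

lemma linIndep_pair (P Q R : Pt) (h : AffineIndependent ℝ ![P, Q, R]) :
    LinearIndependent ℝ ![Q - P, R - P] := by
  rw [affineIndependent_iff_linearIndependent_vsub ℝ _ 0] at h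
  have he : Function.Injective
      (fun j : Fin 2 => (⟨j.succ, Fin.succ_ne_zero j⟩ : {x : Fin 3 // x ≠ 0})) := by
    intro a b hab
    simpa [Fin.succ_inj] using congrArg Subtype.val hab
  have h2 := h.comp _ he
  convert h2 using 1
  funext j
  fin_cases j <;> simp [Matrix.cons_val_one, Matrix.head_cons]
  rfl

lemma vol_scale (X u v : Pt) (h : LinearIndependent ℝ ![u, v]) {k : ℝ} (hk : 0 ≤ k) :
    volume (convexHull ℝ {X, X + u, X + k • v}) =
      ENNReal.ofReal k * volume (convexHull ℝ {X, X + u, X + v}) := by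
  have htr : ∀ w : Pt, volume (convexHull ℝ {X, X + u, X + w})
      = volume (convexHull ℝ {(0:Pt), u, w}) := by
    intro w
    have hs : ({X, X + u, X + w} : Set Pt) = (X +ᵥ ({0, u, w} : Set Pt) : Set Pt) := by
      simp [Set.vadd_set_insert, Set.vadd_set_singleton, vadd_eq_add]
    rw [hs, convexHull_vadd, measure_vadd]
  rw [htr, htr]
  -- scaling by a linear map
  have hcard : Fintype.card (Fin 2) = Module.finrank ℝ Pt := by
    simp [finrank_euclideanSpace]
  set b : Module.Basis (Fin 2) ℝ Pt := basisOfLinearIndependentOfCardEqFinrank h hcard with hb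
  have hb0 : b 0 = u := by rw [hb, coe_basisOfLinearIndependentOfCardEqFinrank]; rfl
  have hb1 : b 1 = v := by rw [hb, coe_basisOfLinearIndependentOfCardEqFinrank]; rfl
  set f : Pt →ₗ[ℝ] Pt := b.constr ℝ ![u, k • v] with hf
  have hfu : f u = u := by rw [← hb0, hf, Module.Basis.constr_basis]; simp [hb0]
  have hfv : f v = k • v := by rw [← hb1, hf, Module.Basis.constr_basis]; simp [hb1]
  have hmat : LinearMap.toMatrix b b f = Matrix.of ![![1,0],![0,k]] := by
    ext i j
    fin_cases i <;> fin_cases j <;>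
      simp [LinearMap.toMatrix_apply, hf, Module.Basis.constr_basis, ← hb0, ← hb1,
        Module.Basis.repr_self]
  have hdet : LinearMap.det f = k := by
    rw [← LinearMap.det_toMatrix b, hmat, Matrix.det_fin_two]
    simp
  have himg : f '' {(0:Pt), u, v} = {0, u, k • v} := by
    rw [Set.image_insert_eq, Set.image_insert_eq, Set.image_singleton, map_zero, hfu, hfv]
  calc volume (convexHull ℝ {(0:Pt), u, k • v})
      = volume (f '' (convexHull ℝ {(0:Pt), u, v})) := by rw [f.image_convexHull, himg]
    _ = ENNReal.ofReal |LinearMap.det f| * volume (convexHull ℝ {(0:Pt), u, v}) :=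
        Measure.addHaar_image_linearMap volume f _
    _ = ENNReal.ofReal k * volume (convexHull ℝ {(0:Pt), u, v}) := by
        rw [hdet, abs_of_nonneg hk]

lemma vol_pos (A B C : Pt) (h : AffineIndependent ℝ ![A, B, C]) :
    0 < volume (tri A B C) := by
  have htop : affineSpan ℝ ({A, B, C} : Set Pt) = ⊤ := by
    have h2 := h.affineSpan_eq_top_iff_card_eq_finrank_add_one.mpr
      (by simp [finrank_euclideanSpace])
    have hr : Set.range ![A, B, C] = {A, B, C} := by
      ext x; simp [Fin.exists_fin_succ]; tauto
    rwa [hr] at h2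
  obtain ⟨x, hx⟩ := interior_convexHull_nonempty_iff_affineSpan_eq_top.mpr htop
  calc (0:ℝ≥0∞) < volume (interior (convexHull ℝ {A, B, C})) :=
        isOpen_interior.measure_pos volume ⟨x, hx⟩
    _ ≤ _ := measure_mono interior_subset

lemma vol_fin (A B C : Pt) : volume (tri A B C) < ⊤ :=
  (((Set.finite_singleton C).insert B).insert A).isCompact_convexHull ℝ |>.measure_lt_top

/-- for a triangle `A B C` with side lengths `a < b < c`,
`t(AB'C) > t(ABC')` iff `b² > a·c`, and `t(AB'C) ≥ t(ABC')` iff `b² ≥ a·c`. -/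
theorem statement11 (A B C B' C' : Pt)
    (hABC : AffineIndependent ℝ ![A, B, C])
    (hab : dist B C < dist C A) (hbc : dist C A < dist A B)
    (hB'ray : OnRay C B B') (hB'dist : dist C B' = dist C A)
    (hC'ray : OnRay A C C') (hC'dist : dist A C' = dist A B) :
    (triArea A B C' < triArea A B' C ↔
      dist B C * dist A B < dist C A ^ 2) ∧
    (triArea A B C' ≤ triArea A B' C ↔
      dist B C * dist A B ≤ dist C A ^ 2) := by
  set a := dist B C with ha'
  set b := dist C A with hb'
  set c := dist A B with hc'
  -- distinctness
  have hBC : B ≠ C := by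
    intro h
    exact (by decide : (1:Fin 3) ≠ 2) (hABC.injective (by simpa using h))
  have hAC : C ≠ A := by
    intro h
    exact (by decide : (2:Fin 3) ≠ 0) (hABC.injective (by simpa using h))
  have ha : 0 < a := dist_pos.mpr hBC

  have hb : 0 < b := dist_pos.mpr hAC
  have hc : 0 < c := hb.trans hbc
  -- B' as a scaling of B from C
  obtain ⟨r, hr0, hrB⟩ := hB'ray.exists_nonneg_left (sub_ne_zero.mpr hBC)
  have hra : r * a = b := by
    calc r * a = r * ‖B - C‖ := by rw [ha', dist_eq_norm]
      _ = ‖r • (B - C)‖ := by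
          rw [norm_smul, Real.norm_eq_abs, abs_of_nonneg hr0]
      _ = ‖B' - C‖ := by rw [hrB]
      _ = dist C B' := by rw [dist_eq_norm, norm_sub_rev]
      _ = b := hB'dist
  -- C' as a scaling of C from A
  obtain ⟨s, hs0, hsC⟩ := hC'ray.exists_nonneg_left (sub_ne_zero.mpr hAC)
  have hsb : s * b = c := by
    calc s * b = s * ‖C - A‖ := by rw [hb', dist_eq_norm]
      _ = ‖s • (C - A)‖ := by
          rw [norm_smul, Real.norm_eq_abs, abs_of_nonneg hs0]
      _ = ‖C' - A‖ := by rw [hsC]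
      _ = dist A C' := by rw [dist_eq_norm, norm_sub_rev]
      _ = c := hC'dist
  -- permuted affine independence
  have hCAB : AffineIndependent ℝ ![C, A, B] := by
    rw [affineIndependent_iff_not_collinear_set]
    have hset : ({C, A, B} : Set Pt) = {A, B, C} := by ext x; simp; tauto
    rw [hset]
    exact affineIndependent_iff_not_collinear_set.mp hABC
  -- volume identities
  have hvolB' : volume (tri A B' C) = ENNReal.ofReal r * volume (tri A B C) := by
    have hli := linIndep_pair C A B hCAB
    have h1 : ({A, B', C} : Set Pt) = {C, C + (A - C), C + r • (B - C)} := by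
      rw [hrB]
      have e1 : C + (A - C) = A := by abel
      have e2 : C + (B' - C) = B' := by abel
      rw [e1, e2]; ext x; simp; tauto
    have h2 : ({A, B, C} : Set Pt) = {C, C + (A - C), C + (B - C)} := by
      have e1 : C + (A - C) = A := by abel
      have e2 : C + (B - C) = B := by abel
      rw [e1, e2]; ext x; simp; tauto
    rw [tri, tri, h1, h2]
    exact vol_scale C (A - C) (B - C) hli hr0
  have hvolC' : volume (tri A B C') = ENNReal.ofReal s * volume (tri A B C) := by
    have hli := linIndep_pair A B C hABC
    have h1 : ({A, B, C'} : Set Pt) = {A, A + (B - A), A + s • (C - A)} := by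
      rw [hsC]
      have e1 : A + (B - A) = B := by abel
      have e2 : A + (C' - A) = C' := by abel
      rw [e1, e2]
    have h2 : ({A, B, C} : Set Pt) = {A, A + (B - A), A + (C - A)} := by
      have e1 : A + (B - A) = B := by abel
      have e2 : A + (C - A) = C := by abel
      rw [e1, e2]
    rw [tri, tri, h1, h2]
    exact vol_scale A (B - A) (C - A) hli hs0
  set T := volume (tri A B C) with hT
  have hT0 : T ≠ 0 := (vol_pos A B C hABC).ne'
  have hTt : T ≠ ⊤ := (vol_fin A B C).ne
  have ht : 0 < T.toReal := ENNReal.toReal_pos hT0 hTt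
  have htR : triArea A B' C = r * T.toReal := by
    rw [triArea, hvolB', ENNReal.toReal_mul, ENNReal.toReal_ofReal hr0]
  have htS : triArea A B C' = s * T.toReal := by
    rw [triArea, hvolC', ENNReal.toReal_mul, ENNReal.toReal_ofReal hs0]
  have hr' : r = b / a := (eq_div_iff ha.ne').mpr hra
  have hs' : s = c / b := (eq_div_iff hb.ne').mpr hsb
  rw [htR, htS, hr', hs']
  constructor
  · rw [mul_lt_mul_iff_of_pos_right ht, div_lt_div_iff₀ hb ha]
    constructor <;> intro h <;> nlinarith
  · rw [mul_le_mul_iff_of_pos_right ht, div_le_div_iff₀ hb ha]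
    constructor <;> intro h <;> nlinarith
end
end

section
/- Let ABC be a triangle with side lengths a < b < c. If a minimum area isosceles container for ABC equals (as a convex set) one of the special containers of the second kind AB₁C, ABC₁, ABC₂, then it equals AB₁C. -/
open EuclideanGeometry MeasureTheory Real

noncomputable section

lemma li_of_aff {A B C : Pt} (h : AffineIndependent ℝ ![A, B, C]) :
    LinearIndependent ℝ ![B - A, C - A] := by
  rw [affineIndependent_iff_not_collinear_set] at h
  refine linearIndependent_fin2.mpr ⟨?_, ?_⟩ <;>
    simp only [Matrix.cons_val_one, Matrix.head_cons, Matrix.cons_val_zero]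
  · intro hCA
    apply h
    have hCA' : C = A := by rwa [sub_eq_zero] at hCA
    subst hCA'
    have : ({C, B, C} : Set Pt) = {C, B} := by ext p; simp; tauto
    rw [this]
    exact collinear_pair ℝ C B
  · intro r hr
    apply h
    rw [collinear_iff_of_mem (Set.mem_insert A {B, C})]
    refine ⟨C - A, fun p hp => ?_⟩
    rcases hp with rfl | rfl | rfl
    · exact ⟨0, by simp⟩
    · exact ⟨r, by rw [vadd_eq_add, hr]; abel⟩
    · exact ⟨1, by simp [vadd_eq_add]⟩

lemma aff_of_li {A B D : Pt} (h : LinearIndependent ℝ ![B - A, D - A]) :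
    AffineIndependent ℝ ![A, B, D] := by
  rw [affineIndependent_iff_not_collinear_set]
  obtain ⟨h1, h2⟩ := linearIndependent_fin2.mp h
  simp only [Matrix.cons_val_one, Matrix.head_cons, Matrix.cons_val_zero] at h1 h2
  intro hcol
  rw [collinear_iff_of_mem (Set.mem_insert A {B, D})] at hcol
  obtain ⟨v, hv⟩ := hcol
  obtain ⟨rB, hB⟩ := hv B (by simp)
  obtain ⟨rD, hD⟩ := hv D (by simp)
  have hBv : B - A = rB • v := by rw [hB, vadd_eq_add]; abel
  have hDv : D - A = rD • v := by rw [hD, vadd_eq_add]; abel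
  have hrD : rD ≠ 0 := by rintro rfl; rw [zero_smul] at hDv; exact h1 hDv
  exact h2 (rB / rD) (by rw [hDv, smul_smul, div_mul_cancel₀ _ hrD, ← hBv])

lemma triArea_pos {A B C : Pt} (h : AffineIndependent ℝ ![A, B, C]) :
    0 < triArea A B C := by
  have hfin : volume (tri A B C) < ⊤ :=
    ((Set.finite_singleton C).insert B |>.insert A).isCompact_convexHull (𝕜 := ℝ) |>.measure_lt_top
  have hspan : affineSpan ℝ ({A, B, C} : Set Pt) = ⊤ := by
    have h2 := h.affineSpan_eq_top_iff_card_eq_finrank_add_one.mpr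
      (by simp [finrank_euclideanSpace_fin])
    have h3 : Set.range ![A, B, C] = {A, B, C} := by
      ext p; simp [Matrix.range_cons, Matrix.range_empty]; tauto
    rwa [h3] at h2
  have hint : (interior (tri A B C)).Nonempty := by
    rw [tri, (convex_convexHull ℝ ({A, B, C} : Set Pt)).interior_nonempty_iff_affineSpan_eq_top,
      affineSpan_convexHull]
    exact hspan
  have hpos : 0 < volume (tri A B C) := Measure.measure_pos_of_nonempty_interior _ hint
  exact ENNReal.toReal_pos hpos.ne' hfin.ne


lemma triArea_shear (X Y Z : Pt) (h : LinearIndependent ℝ ![Y - X, Z - X]) (s t : ℝ) :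
    triArea X Y (s • (Y - X) + t • (Z - X) + X) = |t| * triArea X Y Z := by
  have hcard : Fintype.card (Fin 2) = Module.finrank ℝ Pt := by
    simp [finrank_euclideanSpace_fin]
  set bas : Module.Basis (Fin 2) ℝ Pt := basisOfLinearIndependentOfCardEqFinrank h hcard with hbas
  have hb0 : bas 0 = Y - X := by
    rw [hbas, coe_basisOfLinearIndependentOfCardEqFinrank]; rfl
  have hb1 : bas 1 = Z - X := by
    rw [hbas, coe_basisOfLinearIndependentOfCardEqFinrank]; rfl
  set W : Pt := s • (Y - X) + t • (Z - X) + X with hW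
  set L : Pt →ₗ[ℝ] Pt := bas.constr ℝ ![Y - X, s • (Y - X) + t • (Z - X)] with hL
  have e0 : L (bas 0) = bas 0 := by rw [hL, Module.Basis.constr_basis, hb0]; rfl
  have e1 : L (bas 1) = s • bas 0 + t • bas 1 := by
    rw [hL, Module.Basis.constr_basis, hb0, hb1]; rfl
  have hM : LinearMap.toMatrix bas bas L = !![1, s; 0, t] := by
    ext i j
    rw [LinearMap.toMatrix_apply]
    fin_cases j <;> fin_cases i <;>
      simp [e0, e1, Module.Basis.repr_self, Finsupp.single_apply, map_add]
  have hdet : LinearMap.det L = t := by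
    rw [← LinearMap.det_toMatrix bas, hM, Matrix.det_fin_two_of]; ring
  have hLY : L (Y - X) = Y - X := by rw [← hb0]; exact e0
  have hLZ : L (Z - X) = s • (Y - X) + t • (Z - X) := by
    rw [← hb1, e1, hb0, hb1]
  set f : Pt →ᵃ[ℝ] Pt := AffineMap.mk' (fun p => L (p - X) + X) L X
    (by intro p; simp [vsub_eq_sub, vadd_eq_add]) with hf
  have hfc : ∀ p, f p = L (p - X) + X := fun p => rfl
  have hfX : f X = X := by rw [hfc, sub_self, map_zero, zero_add]
  have hfY : f Y = Y := by rw [hfc, hLY]; abel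
  have hfZ : f Z = W := by rw [hfc, hLZ, hW]
  have himg : tri X Y W = ⇑f '' tri X Y Z := by
    rw [tri, tri, AffineMap.image_convexHull]
    congr 1
    rw [Set.image_insert_eq, Set.image_insert_eq, Set.image_singleton, hfX, hfY, hfZ]
  have hset : ⇑f '' tri X Y Z
      = (fun p => (-X) + p) ⁻¹' (⇑L '' ((fun p => X + p) ⁻¹' tri X Y Z)) := by
    ext q
    simp only [Set.mem_image, Set.mem_preimage]
    constructor
    · rintro ⟨p, hp, rfl⟩
      refine ⟨p - X, by simpa using hp, ?_⟩
      rw [hfc]; abel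
    · rintro ⟨w, hw, hq⟩
      refine ⟨X + w, hw, ?_⟩
      rw [hfc]
      have : X + w - X = w := by abel
      rw [this, hq]
      abel
  rw [triArea, triArea, himg, hset, measure_preimage_add,
    Measure.addHaar_image_linearMap, measure_preimage_add, hdet,
    ENNReal.toReal_mul, ENNReal.toReal_ofReal (abs_nonneg t)]

open RealInnerProductSpace

lemma arith1 {a b c t : ℝ} (ha0 : 0 < a) (hab : a < b) (hbc : b < c)
    (hkey : t * b ^ 2 = b ^ 2 + c ^ 2 - a ^ 2) : c / b < t := by
  have hb0 : 0 < b := ha0.trans hab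
  rw [div_lt_iff₀ hb0]
  nlinarith [mul_pos hc0' hb0, hkey, mul_pos (sub_pos.mpr hab) (show (0:ℝ) < a + b by linarith),
    mul_pos (hb0.trans hbc) (sub_pos.mpr hbc)]
  where hc0' : 0 < c := lt_trans (ha0.trans hab) hbc

lemma arith2 {a b c t : ℝ} (ha0 : 0 < a) (hab : a < b) (hbc : b < c)
    (hkey : t * a ^ 2 = a ^ 2 + c ^ 2 - b ^ 2) : c / b < t := by
  have hb0 : 0 < b := ha0.trans hab
  have hc0 : 0 < c := hb0.trans hbc
  rw [div_lt_iff₀ hb0]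
  have h6 : a ^ 2 < b ^ 2 := by nlinarith
  have h7 : (0:ℝ) < b * (b + c) - a ^ 2 := by nlinarith [mul_pos hb0 hc0]
  have h8 : (0:ℝ) < (c - b) * (b * (b + c) - a ^ 2) := mul_pos (sub_pos.mpr hbc) h7
  nlinarith [h8, hkey, mul_pos ha0 ha0]

/-- if a minimum area isosceles container of a triangle `A B C`
with side lengths `a < b < c` equals one of the special containers of the
second kind `AB₁C`, `ABC₁`, `ABC₂`, then it equals `AB₁C`. -/
theorem statement18 (A B C B₁ C₁ C₂ S P R : Pt)
    (hABC : AffineIndependent ℝ ![A, B, C])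
    (hab : dist B C < dist C A) (hbc : dist C A < dist A B)
    (hB₁ray : OnRay A B B₁) (hB₁ne : B₁ ≠ A) (hB₁dist : dist B₁ C = dist C A)
    (hC₁ray : OnRay A C C₁) (hC₁ne : C₁ ≠ A) (hC₁dist : dist B C₁ = dist A B)
    (hC₂ray : OnRay B C C₂) (hC₂ne : C₂ ≠ B) (hC₂dist : dist A C₂ = dist A B)
    (hmin : IsMinIsoscelesContainer A B C S P R)
    (hsecond : tri S P R = tri A B₁ C ∨ tri S P R = tri A B C₁ ∨
      tri S P R = tri A B C₂) :
    tri S P R = tri A B₁ C := by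
  set a := dist B C with hadef
  set b := dist C A with hbdef
  set c := dist A B with hcdef
  -- basic positivity
  have hBC' : B ≠ C := hABC.injective.ne (by decide : (1 : Fin 3) ≠ 2)
  have ha0 : 0 < a := dist_pos.mpr hBC'
  have hb0 : 0 < b := lt_trans ha0 hab
  have hc0 : 0 < c := lt_trans hb0 hbc
  -- norms of edge vectors
  have hu : ‖B - A‖ = c := by rw [← dist_eq_norm, dist_comm]
  have hv : ‖C - A‖ = b := by rw [← dist_eq_norm]
  have hw : ‖C - B‖ = a := by rw [← dist_eq_norm, dist_comm]
  have hvne : C - A ≠ 0 := by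
    intro h0; rw [h0, norm_zero] at hv; exact hb0.ne hv
  have hwne : C - B ≠ 0 := by
    intro h0; rw [h0, norm_zero] at hw; exact ha0.ne hw
  -- inner product identity
  have hip : 2 * ⟪B - A, C - A⟫ = b ^ 2 + c ^ 2 - a ^ 2 := by
    have h1 := norm_sub_sq_real (B - A) (C - A)
    have h2 : ‖B - A - (C - A)‖ = a := by
      rw [show B - A - (C - A) = -(C - B) by abel, norm_neg, hw]
    rw [h2, hu, hv] at h1
    linarith
  -- linear independence
  have hli := li_of_aff hABC
  obtain ⟨hv0', hns'⟩ := linearIndependent_fin2.mp hli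
  simp only [Matrix.cons_val_one, Matrix.head_cons, Matrix.cons_val_zero] at hv0' hns'
  -- triangle area
  have hT : 0 < triArea A B C := triArea_pos hABC
  -- the better container A B D
  set D : Pt := (c / b) • (C - A) + A with hDdef
  have hDA : D - A = (c / b) • (C - A) := by rw [hDdef]; abel
  have hliD : LinearIndependent ℝ ![B - A, D - A] := by
    refine linearIndependent_fin2.mpr ⟨?_, ?_⟩ <;>
      simp only [Matrix.cons_val_one, Matrix.head_cons, Matrix.cons_val_zero]
    · rw [hDA]
      exact smul_ne_zero (div_ne_zero hc0.ne' hb0.ne') hv0'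
    · intro r
      rw [hDA, smul_smul]
      exact hns' _
  have haffD : AffineIndependent ℝ ![A, B, D] := aff_of_li hliD
  have hDdist : dist D A = c := by
    rw [dist_eq_norm, show D - A = (c / b) • (C - A) from hDA, norm_smul, hv,
      Real.norm_eq_abs, abs_of_pos (div_pos hc0 hb0)]
    field_simp
  have hisoD : IsIsosceles A B D := Or.inr (Or.inl hDdist)
  have hCeq : (1 - b / c) • A + (b / c) • D = C := by
    have hbc1 : b / c * (c / b) = 1 := by field_simp
    rw [hDdef, smul_add, smul_smul, hbc1, one_smul]
    module
  have hsubD : tri A B C ⊆ tri A B D := by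
    have hAm : A ∈ tri A B D := subset_convexHull ℝ _ (by simp)
    have hBm : B ∈ tri A B D := subset_convexHull ℝ _ (by simp)
    have hDm : D ∈ tri A B D := subset_convexHull ℝ _ (by simp)
    have hCm : C ∈ tri A B D := by
      rw [← hCeq]
      have h1 : b / c ≤ 1 := (div_le_one hc0).mpr hbc.le
      have h2 : 0 ≤ b / c := (div_pos hb0 hc0).le
      exact (convex_convexHull ℝ _) hAm hDm (by linarith) h2 (by ring)
    refine convexHull_min ?_ (convex_convexHull ℝ _)
    intro p hp
    rcases hp with rfl | rfl | rfl
    exacts [hAm, hBm, hCm]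
  have hleD : triArea S P R ≤ triArea A B D :=
    hmin.2 A B D ⟨haffD, hisoD, hsubD⟩
  have hAreaD : triArea A B D = (c / b) * triArea A B C := by
    have h1 := triArea_shear A B C hli 0 (c / b)
    rw [zero_smul, zero_add, ← hDdef, abs_of_pos (div_pos hc0 hb0)] at h1
    exact h1
  rcases hsecond with h | h | h
  · exact h
  · -- case tri S P R = tri A B C₁ : contradiction
    exfalso
    have hray : SameRay ℝ (C - A) (C₁ - A) := hC₁ray
    obtain ⟨t₁, ht₁0, ht₁⟩ := hray.exists_nonneg_left hvne
    have ht₁ne : t₁ ≠ 0 := by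
      rintro rfl
      rw [zero_smul] at ht₁
      exact hC₁ne (by rwa [eq_comm, sub_eq_zero] at ht₁)
    have hnorm : ‖B - A - t₁ • (C - A)‖ = c := by
      rw [show B - A - t₁ • (C - A) = B - A - (C₁ - A) by rw [ht₁],
        show B - A - (C₁ - A) = B - C₁ by abel, ← dist_eq_norm]
      exact hC₁dist
    have hsq := norm_sub_sq_real (B - A) (t₁ • (C - A))
    rw [hnorm, hu, real_inner_smul_right, norm_smul, hv, Real.norm_eq_abs,
      mul_pow, sq_abs] at hsq
    have hsq' : c ^ 2 = c ^ 2 - 2 * (t₁ * ⟪B - A, C - A⟫) + t₁ ^ 2 * b ^ 2 := hsq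
    have hkey : t₁ * b ^ 2 = b ^ 2 + c ^ 2 - a ^ 2 := by
      have h2 : t₁ * (t₁ * b ^ 2) = t₁ * (2 * ⟪B - A, C - A⟫) := by
        linear_combination -hsq'
      have h3 := mul_left_cancel₀ ht₁ne h2
      rw [hip] at h3
      linarith
    have ht₁gt : c / b < t₁ := arith1 ha0 hab hbc hkey
    have hAC₁ : C₁ = t₁ • (C - A) + A := sub_eq_iff_eq_add.mp ht₁.symm
    have hA1 : triArea A B C₁ = |t₁| * triArea A B C := by
      have h1 := triArea_shear A B C hli 0 t₁
      rwa [zero_smul, zero_add, ← hAC₁] at h1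
    have hspr : triArea S P R = triArea A B C₁ := by
      rw [triArea, triArea, h]
    have ht₁pos : 0 < t₁ := lt_trans (div_pos hc0 hb0) ht₁gt
    rw [hspr, hA1, abs_of_pos ht₁pos] at hleD
    rw [hAreaD] at hleD
    linarith [mul_lt_mul_of_pos_right ht₁gt hT]
  · -- case tri S P R = tri A B C₂ : contradiction
    exfalso
    have hray : SameRay ℝ (C - B) (C₂ - B) := hC₂ray
    obtain ⟨t₂, ht₂0, ht₂⟩ := hray.exists_nonneg_left hwne
    have ht₂ne : t₂ ≠ 0 := by
      rintro rfl
      rw [zero_smul] at ht₂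
      exact hC₂ne (by rwa [eq_comm, sub_eq_zero] at ht₂)
    have hnorm : ‖B - A + t₂ • (C - B)‖ = c := by
      rw [show B - A + t₂ • (C - B) = B - A + (C₂ - B) by rw [ht₂],
        show B - A + (C₂ - B) = -(A - C₂) by abel, norm_neg, ← dist_eq_norm]
      exact hC₂dist
    have hsq := norm_add_sq_real (B - A) (t₂ • (C - B))
    rw [hnorm, hu, real_inner_smul_right, norm_smul, hw, Real.norm_eq_abs,
      mul_pow, sq_abs] at hsq
    have hiw : ⟪B - A, C - B⟫ = ⟪B - A, C - A⟫ - c ^ 2 := by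
      have h1 : (C : Pt) - B = (C - A) - (B - A) := by abel
      rw [h1, inner_sub_right, real_inner_self_eq_norm_sq, hu]
    rw [hiw] at hsq
    have hsq' : c ^ 2 = c ^ 2 + 2 * (t₂ * (⟪B - A, C - A⟫ - c ^ 2)) + t₂ ^ 2 * a ^ 2 := hsq
    have hkey : t₂ * a ^ 2 = a ^ 2 + c ^ 2 - b ^ 2 := by
      have h2 : t₂ * (t₂ * a ^ 2) = t₂ * (2 * c ^ 2 - 2 * ⟪B - A, C - A⟫) := by
        linear_combination -hsq'
      have h3 := mul_left_cancel₀ ht₂ne h2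
      linarith [hip, h3]
    have ht₂gt : c / b < t₂ := arith2 ha0 hab hbc hkey
    have hAC₂ : C₂ = (1 - t₂) • (B - A) + t₂ • (C - A) + A := by
      have h0 : C₂ = t₂ • (C - B) + B := sub_eq_iff_eq_add.mp ht₂.symm
      rw [h0]
      module
    have hA2 : triArea A B C₂ = |t₂| * triArea A B C := by
      have h1 := triArea_shear A B C hli (1 - t₂) t₂
      rwa [← hAC₂] at h1
    have hspr : triArea S P R = triArea A B C₂ := by
      rw [triArea, triArea, h]
    have ht₂pos : 0 < t₂ := lt_trans (div_pos hc0 hb0) ht₂gt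
    rw [hspr, hA2, abs_of_pos ht₂pos] at hleD
    rw [hAreaD] at hleD
    linarith [mul_lt_mul_of_pos_right ht₂gt hT]
end
end
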